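/- If (A*, d) is a finite-dimensional DGA of n-PD-type and x ∈ Aⁱ is a cocycle whose cohomology class pairs trivially with all of H^{n-i}(A) (i.e., [x]·[y] = 0 in Hⁿ(A) for all cocycles y ∈ A^{n-i}), then [x] = 0 in Hⁱ(A). -/

import Mathlib

/-!
Pair `Aⁱ` with `Aⁿ⁻ⁱ` by `(a, b) ↦ ℓ (a * b)`, where `ℓ` is a functional that is nonzero on the
line `Aⁿ`; nondegeneracy makes this a perfect pairing. Since `d` kills `Aⁿ⁻¹`, the Leibniz rule
gives `ℓ (du * y) = ± ℓ (u * dy)` for `u ∈ Aⁱ⁻¹`, `y ∈ Aⁿ⁻ⁱ`. Hence the coboundaries `Bⁱ` lie in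
the annihilator of the cocycles `Zⁿ⁻ⁱ`, and `d : Aⁿ⁻ⁱ → Aⁿ⁻ⁱ⁺¹` is, up to sign, the adjoint of
`d : Aⁱ⁻¹ → Aⁱ`, so `dim Bⁱ ≥ dim Aⁿ⁻ⁱ - dim Zⁿ⁻ⁱ = dim (Zⁿ⁻ⁱ)^⊥`. Thus `Bⁱ = (Zⁿ⁻ⁱ)^⊥`, which
contains `x` by hypothesis.
-/

open Module LinearMap Function

section Pairing

variable {K U U' V W : Type*} [Field K]
  [AddCommGroup U] [Module K U] [AddCommGroup U'] [Module K U']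
  [AddCommGroup V] [Module K V] [AddCommGroup W] [Module K W]

theorem finrank_range_le_of_flip_comp_eq [FiniteDimensional K U] [FiniteDimensional K V]
    {Q : U →ₗ[K] U' →ₗ[K] K} (hQ : Injective Q.flip) {D₁ : U →ₗ[K] V} {D₂ : W →ₗ[K] U'}
    {R : W →ₗ[K] Dual K V} (h : Q.flip ∘ₗ D₂ = D₁.dualMap ∘ₗ R) :
    finrank K (range D₂) ≤ finrank K (range D₁) := by
  calc finrank K (range D₂) = finrank K (range (Q.flip ∘ₗ D₂)) := by
        rw [range_comp]; exact (Submodule.equivMapOfInjective _ hQ _).finrank_eq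
    _ ≤ finrank K (range D₁.dualMap) := by
        rw [h]; exact Submodule.finrank_mono (range_comp_le_range _ _)
    _ = finrank K (range D₁) := finrank_range_dualMap_eq_finrank_range D₁

theorem range_eq_comap_dualAnnihilator_ker [FiniteDimensional K U] [FiniteDimensional K V]
    (P : V →ₗ[K] W →ₗ[K] K) [P.IsPerfPair] {Q : U →ₗ[K] U' →ₗ[K] K} (hQ : Injective Q.flip)
    (D₁ : U →ₗ[K] V) (D₂ : W →ₗ[K] U') {c : K} (hc : c ≠ 0)
    (hadj : ∀ u w, P (D₁ u) w = c * Q u (D₂ w)) :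
    range D₁ = (ker D₂).dualAnnihilator.comap P := by
  have : FiniteDimensional K W := .of_injective P.flip (IsPerfPair.bijective_right P).1
  have hle : range D₁ ≤ (ker D₂).dualAnnihilator.comap P := by
    rintro _ ⟨u, rfl⟩
    simp only [Submodule.mem_comap, Submodule.mem_dualAnnihilator]
    intro w hw
    rw [hadj, mem_ker.mp hw, map_zero, mul_zero]
  refine Submodule.eq_of_le_of_finrank_le hle ?_
  have hrank : finrank K (range D₂) ≤ finrank K (range D₁) := by
    refine finrank_range_le_of_flip_comp_eq hQ (R := c⁻¹ • P.flip) ?_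
    ext w u
    simp [hadj, hc]
  have hcomap :
      finrank K ((ker D₂).dualAnnihilator.comap P) + finrank K (ker D₂) = finrank K W := by
    rw [show (ker D₂).dualAnnihilator.comap P
        = (ker D₂).dualAnnihilator.comap (P.toPerfPair : V →ₗ[K] Dual K W) from rfl,
      Submodule.comap_equiv_eq_map_symm, LinearEquiv.finrank_map_eq, add_comm,
      Subspace.finrank_add_finrank_dualAnnihilator_eq]
  have := finrank_range_add_finrank_ker D₂
  omega

end Pairing

theorem exists_dual_disjoint_ker_of_le_span_singleton {K V : Type*} [Field K] [AddCommGroup V]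
    [Module K V] {v : V} (hv : v ≠ 0) {S : Submodule K V} (hS : S ≤ K ∙ v) :
    ∃ ℓ : Dual K V, Disjoint S (ker ℓ) := by
  obtain ⟨ℓ, hℓ⟩ := Projective.exists_dual_eq_one K hv
  refine ⟨ℓ, Submodule.disjoint_def.mpr fun x hxS hxℓ => ?_⟩
  obtain ⟨a, rfl⟩ := Submodule.mem_span_singleton.mp (hS hxS)
  rw [mem_ker, map_smul, hℓ, smul_eq_mul, mul_one] at hxℓ
  rw [hxℓ, zero_smul]

section MulPairing

variable {K A : Type*} [Field K] [Ring A] [Algebra K A]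

def mulPairing (ℓ : A →ₗ[K] K) (U W : Submodule K A) : U →ₗ[K] W →ₗ[K] K :=
  ((LinearMap.mul K A).compl₁₂ U.subtype W.subtype).compr₂ ℓ

@[simp]
theorem mulPairing_apply (ℓ : A →ₗ[K] K) (U W : Submodule K A) (a : U) (b : W) :
    mulPairing ℓ U W a b = ℓ (a * b) := rfl

variable {ℓ : A →ₗ[K] K} {U W T : Submodule K A}

theorem mulPairing_injective (hℓ : Disjoint T (ker ℓ)) (hUW : U * W ≤ T)
    (hU : ∀ a ∈ U, (∀ b ∈ W, a * b = 0) → a = 0) : Injective (mulPairing ℓ U W) := by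
  refine (injective_iff_map_eq_zero _).mpr fun a ha => Subtype.ext <| hU a a.2 fun b hb => ?_
  refine Submodule.disjoint_def.mp hℓ _ (hUW (Submodule.mul_mem_mul a.2 hb)) ?_
  simpa using LinearMap.congr_fun ha ⟨b, hb⟩

theorem mulPairing_flip_injective (hℓ : Disjoint T (ker ℓ)) (hUW : U * W ≤ T)
    (hW : ∀ b ∈ W, (∀ a ∈ U, a * b = 0) → b = 0) : Injective (mulPairing ℓ U W).flip := by
  refine (injective_iff_map_eq_zero _).mpr fun b hb => Subtype.ext <| hW b b.2 fun a ha => ?_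
  refine Submodule.disjoint_def.mp hℓ _ (hUW (Submodule.mul_mem_mul ha b.2)) ?_
  simpa using LinearMap.congr_fun hb ⟨a, ha⟩

theorem map_d_mul_eq_neg_mul_map_mul_d (ℓ : A →ₗ[K] K) {d : A →ₗ[K] A} {p : ℕ} {u y : A}
    (hleib : d (u * y) = d u * y + ((-1 : ℤ) ^ p) • (u * d y)) (hduy : d (u * y) = 0) :
    ℓ (d u * y) = -(-1 : K) ^ p * ℓ (u * d y) := by
  rw [hduy] at hleib
  rw [eq_neg_of_add_eq_zero_left hleib.symm, map_neg, map_zsmul, zsmul_eq_mul]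
  push_cast
  ring

end MulPairing

theorem SetLike.GradedMonoid.mul_le_of_add_eq {ι R A : Type*} [AddMonoid ι] [CommSemiring R]
    [Semiring A] [Algebra R A] {𝒜 : ι → Submodule R A} [SetLike.GradedMonoid 𝒜] {i j k : ι}
    (h : i + j = k) : 𝒜 i * 𝒜 j ≤ 𝒜 k :=
  Submodule.mul_le.mpr fun _ ha _ hb => h ▸ SetLike.mul_mem_graded ha hb

theorem stmt_19_general (A : Type*) [Ring A] [Algebra ℝ A] [FiniteDimensional ℝ A]
    (n : ℕ) (𝒜 : ℕ → Submodule ℝ A) [GradedAlgebra 𝒜]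
    (v : A) (hvne : v ≠ 0) (hvspan : ∀ x ∈ 𝒜 n, ∃ c : ℝ, x = c • v)
    (hnd : ∀ i, 0 < i → i < n →
      (∀ x ∈ 𝒜 i, (∀ y ∈ 𝒜 (n - i), x * y = 0) → x = 0) ∧
      (∀ y ∈ 𝒜 (n - i), (∀ x ∈ 𝒜 i, x * y = 0) → y = 0))
    (d : A →ₗ[ℝ] A)
    (hd : ∀ i, ∀ x ∈ 𝒜 i, d x ∈ 𝒜 (i + 1))
    (hleib : ∀ (i : ℕ) (x y : A), x ∈ 𝒜 i →
      d (x * y) = d x * y + ((-1 : ℤ) ^ i) • (x * d y))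
    (hdn : ∀ x ∈ 𝒜 (n - 1), d x = 0)
    (i : ℕ) (hi0 : 0 < i) (hin : i < n)
    (x : A) (hx : x ∈ 𝒜 i)
    (hpair : ∀ y ∈ 𝒜 (n - i), d y = 0 → x * y ∈ Submodule.map d (𝒜 (n - 1))) :
    x ∈ Submodule.map d (𝒜 (i - 1)) := by
  have hx_perp : ∀ y ∈ 𝒜 (n - i), d y = 0 → x * y = 0 := fun y hy hdy => by
    obtain ⟨w, hw, hwxy⟩ := hpair y hy hdy
    rw [← hwxy, hdn w hw]
  obtain ⟨ℓ, hℓ⟩ := exists_dual_disjoint_ker_of_le_span_singleton hvne (S := 𝒜 n) fun y hy =>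
    Submodule.mem_span_singleton.mpr ((hvspan y hy).imp fun _ h => h.symm)
  have hD₁ : ∀ u ∈ 𝒜 (i - 1), d u ∈ 𝒜 i := fun u hu => by
    simpa [Nat.sub_add_cancel hi0] using hd _ u hu
  have hD₂ : ∀ y ∈ 𝒜 (n - i), d y ∈ 𝒜 (n - (i - 1)) := fun y hy => by
    simpa [show n - i + 1 = n - (i - 1) by omega] using hd _ y hy
  have : (mulPairing ℓ (𝒜 i) (𝒜 (n - i))).IsPerfPair := .of_injective
    (mulPairing_injective hℓ (SetLike.GradedMonoid.mul_le_of_add_eq (by omega)) (hnd i hi0 hin).1)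
    (mulPairing_flip_injective hℓ (SetLike.GradedMonoid.mul_le_of_add_eq (by omega))
      (hnd i hi0 hin).2)
  -- in degree `0` nondegeneracy comes from the unit instead of `hnd`
  have hnd' : ∀ b ∈ 𝒜 (n - (i - 1)), (∀ a ∈ 𝒜 (i - 1), a * b = 0) → b = 0 := by
    rcases Nat.eq_zero_or_pos (i - 1) with h | h
    · exact fun b _ hb => by simpa using hb 1 (h ▸ SetLike.one_mem_graded 𝒜)
    · exact (hnd (i - 1) h (by omega)).2
  have hQ := mulPairing_flip_injective hℓ (SetLike.GradedMonoid.mul_le_of_add_eq (by omega)) hnd'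
  have hadj : ∀ u y, mulPairing ℓ _ _ (d.restrict hD₁ u) y
      = -(-1 : ℝ) ^ (i - 1) * mulPairing ℓ _ _ u (d.restrict hD₂ y) := fun u y =>
    map_d_mul_eq_neg_mul_map_mul_d ℓ (hleib _ u y u.2) <| hdn _ <|
      SetLike.GradedMonoid.mul_le_of_add_eq (by omega) (Submodule.mul_mem_mul u.2 y.2)
  have hrange := range_eq_comap_dualAnnihilator_ker _ hQ _ _ (by simp) hadj
  obtain ⟨u, hu⟩ : ⟨x, hx⟩ ∈ range (d.restrict hD₁) := by
    rw [hrange, Submodule.mem_comap, Submodule.mem_dualAnnihilator]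
    intro y hy
    rw [mulPairing_apply, hx_perp y y.2 (congrArg Subtype.val (mem_ker.mp hy)), map_zero]
  exact ⟨u, u.2, congrArg Subtype.val hu⟩

/-- If `(A*, d)` is a finite-dimensional DGA of `n`-PD-type and `x ∈ Aⁱ` (`0 < i < n`) is a
cocycle whose class pairs trivially with all of `H^{n-i}(A)` (i.e. `x·y` is exact for every
cocycle `y ∈ A^{n-i}`), then `[x] = 0 in Hⁱ(A)`, i.e. `x` is exact. -/
theorem stmt_19 (A : Type*) [Ring A] [Algebra ℝ A] [FiniteDimensional ℝ A]
    (n : ℕ) (𝒜 : ℕ → Submodule ℝ A) [GradedAlgebra 𝒜]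
    (hcomm : ∀ (i j : ℕ) (x y : A), x ∈ 𝒜 i → y ∈ 𝒜 j →
      x * y = ((-1 : ℤ) ^ (i * j)) • (y * x))
    (hone : (1 : A) ≠ 0) (hzero : ∀ x ∈ 𝒜 0, ∃ c : ℝ, x = c • (1 : A))
    (htop : ∀ i, n < i → 𝒜 i = ⊥)
    (v : A) (hv : v ∈ 𝒜 n) (hvne : v ≠ 0) (hvspan : ∀ x ∈ 𝒜 n, ∃ c : ℝ, x = c • v)
    (hnd : ∀ i, 0 < i → i < n →
      (∀ x ∈ 𝒜 i, (∀ y ∈ 𝒜 (n - i), x * y = 0) → x = 0) ∧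
      (∀ y ∈ 𝒜 (n - i), (∀ x ∈ 𝒜 i, x * y = 0) → y = 0))
    (d : A →ₗ[ℝ] A)
    (hd : ∀ i, ∀ x ∈ 𝒜 i, d x ∈ 𝒜 (i + 1))
    (hdd : d.comp d = 0)
    (hleib : ∀ (i : ℕ) (x y : A), x ∈ 𝒜 i →
      d (x * y) = d x * y + ((-1 : ℤ) ^ i) • (x * d y))
    (hdn : ∀ x ∈ 𝒜 (n - 1), d x = 0)
    (hd0 : ∀ x ∈ 𝒜 0, d x = 0)
    (i : ℕ) (hi0 : 0 < i) (hin : i < n)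
    (x : A) (hx : x ∈ 𝒜 i) (hxd : d x = 0)
    (hpair : ∀ y ∈ 𝒜 (n - i), d y = 0 → x * y ∈ Submodule.map d (𝒜 (n - 1))) :
    x ∈ Submodule.map d (𝒜 (i - 1)) :=
  stmt_19_general A n 𝒜 v hvne hvspan hnd d hd hleib hdn i hi0 hin x hx hpair
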